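/- arXiv:0802.2570 — 3 statements merged into one kernel-verified Lean document; each statement's English description precedes it below -/
import Mathlib

section
/- Let n ≥ 2 be an integer and let λ₁, …, λₙ be positive real numbers. Then ∑_{i=1}^n λᵢ⁻¹ ≥ ((∑_{i=1}^n λᵢ) / (∏_{i=1}^n λᵢ))^{1/(n−1)}. -/
/-!
With `μᵢ = λᵢ⁻¹` and `S = ∑ μᵢ`, one has `(∑ λᵢ) / ∏ λᵢ = ∑ᵢ ∏_{j ≠ i} μⱼ`. Each of these
products is at most `μ_{σ i} · S^{n-2}`, where `σ` is a permutation without fixed points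
(a cyclic rotation), so summing over `i` bounds the whole sum by `S · S^{n-2} = S^{n-1}`.
-/

open Finset

theorem sum_div_prod_eq_sum_prod_erase_inv {ι K : Type*} [Fintype ι] [DecidableEq ι] [Field K]
    (x : ι → K) (hx : ∀ i, x i ≠ 0) :
    (∑ i, x i) / ∏ i, x i = ∑ i, ∏ j ∈ univ.erase i, (x j)⁻¹ := by
  rw [sum_div]
  refine sum_congr rfl fun i _ => ?_
  rw [← mul_prod_erase univ x (mem_univ i), prod_inv_distrib, div_mul_cancel_left₀ (hx i)]

theorem prod_le_mul_pow_card_sub_one {ι R : Type*} [CommSemiring R] [PartialOrder R]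
    [IsOrderedRing R] {s : Finset ι} {x : ι → R} {c : R} (hx : ∀ j ∈ s, 0 ≤ x j)
    (hc : ∀ j ∈ s, x j ≤ c) {a : ι} (ha : a ∈ s) :
    ∏ j ∈ s, x j ≤ x a * c ^ (#s - 1) := by
  classical
  rw [← mul_prod_erase s x ha, ← card_erase_of_mem ha, ← prod_const]
  exact mul_le_mul_of_nonneg_left
    (prod_le_prod (fun j hj => hx j (mem_of_mem_erase hj)) fun j hj => hc j (mem_of_mem_erase hj))
    (hx a ha)

theorem sum_prod_erase_le_sum_pow {ι R : Type*} [Fintype ι] [DecidableEq ι] [CommSemiring R]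
    [PartialOrder R] [IsOrderedRing R] (σ : Equiv.Perm ι) (hσ : ∀ i, σ i ≠ i) {x : ι → R}
    (hx : ∀ i, 0 ≤ x i) :
    ∑ i, ∏ j ∈ univ.erase i, x j ≤ (∑ i, x i) ^ (Fintype.card ι - 1) := by
  rcases isEmpty_or_nonempty ι with hι | ⟨⟨i₀⟩⟩
  · simp
  have hcard : 2 ≤ Fintype.card ι := Fintype.one_lt_card_iff.2 ⟨σ i₀, i₀, hσ i₀⟩
  set S := ∑ i, x i
  calc ∑ i, ∏ j ∈ univ.erase i, x j
      ≤ ∑ i, x (σ i) * S ^ (Fintype.card ι - 2) := by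
        refine sum_le_sum fun i _ => ?_
        have h := prod_le_mul_pow_card_sub_one (s := univ.erase i) (c := S) (fun j _ => hx j)
          (fun j _ => single_le_sum (fun k _ => hx k) (mem_univ j))
          (mem_erase.2 ⟨hσ i, mem_univ _⟩)
        rwa [card_erase_of_mem (mem_univ i), card_univ, Nat.sub_sub] at h
    _ = S ^ (Fintype.card ι - 1) := by
        rw [← sum_mul, Equiv.sum_comp σ x, ← pow_succ']
        congr 1
        omega

/-- For positive reals `λ₁, …, λₙ` with `n ≥ 2`,
`∑ λᵢ⁻¹ ≥ ((∑ λᵢ) / (∏ λᵢ))^{1/(n-1)}`. -/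
theorem stmt_2 (n : ℕ) (hn : 2 ≤ n) (l : Fin n → ℝ) (hl : ∀ i, 0 < l i) :
    ((∑ i, l i) / ∏ i, l i) ^ ((1 : ℝ) / ((n : ℝ) - 1)) ≤ ∑ i, (l i)⁻¹ := by
  obtain ⟨m, rfl⟩ : ∃ m, n = m + 2 := ⟨n - 2, by omega⟩
  have key : (∑ i, l i) / ∏ i, l i ≤ (∑ i, (l i)⁻¹) ^ (m + 1) := by
    rw [sum_div_prod_eq_sum_prod_erase_inv l fun i => (hl i).ne']
    simpa using sum_prod_erase_le_sum_pow (finRotate (m + 2))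
      (fun i => Equiv.Perm.mem_support.1 (support_finRotate ▸ mem_univ i))
      fun i => (inv_pos.2 (hl i)).le
  have hexp : (1 : ℝ) / ((↑(m + 2) : ℝ) - 1) = ((m + 1 : ℕ) : ℝ)⁻¹ := by
    push_cast
    ring
  rw [hexp, Real.rpow_inv_le_iff_of_pos (div_pos (sum_pos (fun i _ => hl i) univ_nonempty)
      (prod_pos fun i _ => hl i)).le (sum_nonneg fun i _ => (inv_pos.2 (hl i)).le)
      (by positivity), Real.rpow_natCast]
  exact key
end

section
/- Let n ≥ 2 and let A and B be n×n complex Hermitian positive definite matrices. Then trace(B⁻¹A), trace(A⁻¹B), det A and det B are positive real numbers and trace(B⁻¹A) ≥ (trace(A⁻¹B) · det A / det B)^{1/(n−1)}. -/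
open Matrix Finset
open scoped ComplexOrder

/-! Write `B⁻¹ = U Uᴴ` and put `M = Uᴴ A U`, a positive definite matrix with eigenvalues
`μ₁, …, μₙ > 0`. Then `trace (B⁻¹ A) = ∑ μᵢ`, `trace (A⁻¹ B) = ∑ μᵢ⁻¹` and `det A / det B = ∏ μᵢ`,
so `trace (A⁻¹ B) · det A / det B` is the elementary symmetric polynomial `e_{n-1}(μ)`, which is
at most `(∑ μᵢ) ^ (n - 1)` because each of its monomials occurs in the expansion of that power. -/

namespace Finset

variable {ι : Type*} [DecidableEq ι]

theorem sum_prod_erase_le_sum_pow_card_sub_one {R : Type*} [CommSemiring R] [PartialOrder R]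
    [IsOrderedRing R] {s : Finset ι} (hs : s.Nonempty) {f : ι → R} (hf : ∀ i ∈ s, 0 ≤ f i) :
    ∑ i ∈ s, ∏ j ∈ s.erase i, f j ≤ (∑ i ∈ s, f i) ^ (#s - 1) := by
  induction hs using Nonempty.cons_induction with
  | singleton a => simp
  | cons a t ha ht ih =>
    have hfa : 0 ≤ f a := hf a (mem_cons_self a t)
    have hft : ∀ i ∈ t, 0 ≤ f i := fun i hi => hf i (mem_cons_of_mem hi)
    set S := ∑ i ∈ t, f i
    have hS : 0 ≤ S := sum_nonneg hft
    obtain ⟨m, hm⟩ : ∃ m, #t = m + 1 := ⟨#t - 1, by have := ht.card_pos; omega⟩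
    have h_split : ∑ i ∈ cons a t ha, ∏ j ∈ (cons a t ha).erase i, f j
        = ∏ j ∈ t, f j + f a * ∑ i ∈ t, ∏ j ∈ t.erase i, f j := by
      rw [sum_cons, cons_eq_insert, erase_insert ha, mul_sum]
      refine congrArg _ (sum_congr rfl fun i hi => ?_)
      rw [erase_insert_of_ne (ne_of_mem_of_not_mem hi ha).symm,
        prod_insert fun h => ha (mem_of_mem_erase h)]
    have h_prod : ∏ j ∈ t, f j ≤ S ^ (m + 1) := by
      rw [← hm, ← prod_const]
      exact prod_le_prod hft fun i hi => single_le_sum hft hi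
    have h_ih : ∑ i ∈ t, ∏ j ∈ t.erase i, f j ≤ S ^ m := by
      simpa only [hm, Nat.add_sub_cancel] using ih hft
    rw [h_split, sum_cons, card_cons, hm, Nat.add_sub_cancel]
    calc ∏ j ∈ t, f j + f a * ∑ i ∈ t, ∏ j ∈ t.erase i, f j
        ≤ S ^ (m + 1) + f a * S ^ m := add_le_add h_prod (mul_le_mul_of_nonneg_left h_ih hfa)
      _ = (f a + S) * S ^ m := by ring
      _ ≤ (f a + S) * (f a + S) ^ m := by gcongr; exact le_add_of_nonneg_left hfa
      _ = (f a + S) ^ (m + 1) := (pow_succ' _ _).symm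

theorem sum_inv_mul_prod_eq_sum_prod_erase {K : Type*} [Field K] {s : Finset ι} {f : ι → K}
    (hf : ∀ i ∈ s, f i ≠ 0) :
    (∑ i ∈ s, (f i)⁻¹) * ∏ i ∈ s, f i = ∑ i ∈ s, ∏ j ∈ s.erase i, f j := by
  rw [sum_mul]
  refine sum_congr rfl fun i hi => ?_
  rw [← mul_prod_erase s f hi, ← mul_assoc, inv_mul_cancel₀ (hf i hi), one_mul]

end Finset

theorem Real.sum_inv_mul_prod_rpow_le_sum {ι : Type*} {s : Finset ι} (hs : 2 ≤ #s) {f : ι → ℝ}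
    (hf : ∀ i ∈ s, 0 < f i) :
    ((∑ i ∈ s, (f i)⁻¹) * ∏ i ∈ s, f i) ^ (1 / ((#s : ℝ) - 1)) ≤ ∑ i ∈ s, f i := by
  classical
  have hs_pos : (0 : ℝ) < #s - 1 := by
    have : (2 : ℝ) ≤ #s := by exact_mod_cast hs
    linarith
  have hf₀ : ∀ i ∈ s, 0 ≤ f i := fun i hi => (hf i hi).le
  have h_le : (∑ i ∈ s, (f i)⁻¹) * ∏ i ∈ s, f i ≤ (∑ i ∈ s, f i) ^ ((#s : ℝ) - 1) := by
    rw [sum_inv_mul_prod_eq_sum_prod_erase fun i hi => (hf i hi).ne',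
      ← Nat.cast_one, ← Nat.cast_sub (by omega), Real.rpow_natCast]
    exact sum_prod_erase_le_sum_pow_card_sub_one (card_pos.1 (by omega)) hf₀
  rwa [one_div, Real.rpow_inv_le_iff_of_pos
    (mul_nonneg (sum_nonneg fun i hi => inv_nonneg.2 (hf₀ i hi)) (prod_nonneg hf₀))
    (sum_nonneg hf₀) hs_pos]

namespace Matrix

variable {n : Type*} [Fintype n] [DecidableEq n]

section Congruence

variable {R : Type*} [CommRing R] [StarRing R] {A B U : Matrix n n R}

theorem trace_inv_mul_eq_trace_star_mul_mul (hBU : B⁻¹ = U * star U) :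
    (B⁻¹ * A).trace = (star U * A * U).trace := by
  rw [hBU, trace_mul_cycle (star U) A U]

theorem trace_inv_mul_eq_trace_inv_star_mul_mul (hB : IsUnit B) (hBU : B⁻¹ = U * star U) :
    (A⁻¹ * B).trace = (star U * A * U)⁻¹.trace := by
  rw [Matrix.mul_inv_rev, Matrix.mul_inv_rev, trace_mul_comm U⁻¹, mul_assoc, ← Matrix.mul_inv_rev,
    ← hBU, nonsing_inv_nonsing_inv _ ((isUnit_iff_isUnit_det B).1 hB)]

theorem det_eq_det_star_mul_mul_mul_det (hB : IsUnit B) (hBU : B⁻¹ = U * star U) :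
    A.det = (star U * A * U).det * B.det := by
  have h : (U * star U).det * B.det = 1 := by
    rw [← hBU, ← det_mul, nonsing_inv_mul _ ((isUnit_iff_isUnit_det B).1 hB), det_one]
  simp only [det_mul] at h ⊢
  linear_combination (-A.det) * h

end Congruence

variable {𝕜 : Type*} [RCLike 𝕜]

theorem IsHermitian.trace_cfc {A : Matrix n n 𝕜} (hA : A.IsHermitian) (f : ℝ → ℝ) :
    (cfc f A).trace = ∑ i, (f (hA.eigenvalues i) : 𝕜) := by
  rw [hA.cfc_eq, IsHermitian.cfc, Unitary.conjStarAlgAut_apply, trace_mul_cycle,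
    Unitary.coe_star_mul_self, one_mul, trace_diagonal]
  rfl

theorem PosDef.trace_inv {A : Matrix n n 𝕜} (hA : A.PosDef) :
    A⁻¹.trace = ∑ i, ((hA.1.eigenvalues i)⁻¹ : 𝕜) := by
  rw [nonsing_inv_eq_ringInverse, ← cfc_ringInverse_id (R := ℝ) _ hA.isUnit hA.1.isSelfAdjoint,
    hA.1.trace_cfc]
  norm_cast

open scoped MatrixOrder in
theorem PosDef.exists_isUnit_inv_eq_mul_star {B : Matrix n n 𝕜} (hB : B.PosDef) :
    ∃ U, IsUnit U ∧ B⁻¹ = U * star U :=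
  CStarAlgebra.isStrictlyPositive_iff_eq_mul_star_self.mp hB.inv.isStrictlyPositive

end Matrix

/-- For `n ≥ 2` and Hermitian positive definite `n×n` complex matrices `A, B`,
the quantities `trace(B⁻¹A)`, `trace(A⁻¹B)`, `det A`, `det B` are positive
real numbers and `trace(B⁻¹A) ≥ (trace(A⁻¹B) · det A / det B)^{1/(n-1)}`. -/
theorem stmt_3 (n : ℕ) (hn : 2 ≤ n) (A B : Matrix (Fin n) (Fin n) ℂ)
    (hA : A.PosDef) (hB : B.PosDef) :
    ∃ tBA tAB dA dB : ℝ, 0 < tBA ∧ 0 < tAB ∧ 0 < dA ∧ 0 < dB ∧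
      (B⁻¹ * A).trace = (tBA : ℂ) ∧ (A⁻¹ * B).trace = (tAB : ℂ) ∧
      A.det = (dA : ℂ) ∧ B.det = (dB : ℂ) ∧
      (tAB * dA / dB) ^ ((1 : ℝ) / ((n : ℝ) - 1)) ≤ tBA := by
  have : NeZero n := ⟨by omega⟩
  obtain ⟨U, hU, hBU⟩ := hB.exists_isUnit_inv_eq_mul_star
  have hM : (star U * A * U).PosDef := hU.posDef_star_left_conjugate_iff.2 hA
  set μ := hM.1.eigenvalues
  set ν := hB.1.eigenvalues
  have hμ : ∀ i ∈ univ, 0 < μ i := fun i _ => hM.eigenvalues_pos i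
  have hν : ∀ i ∈ univ, 0 < ν i := fun i _ => hB.eigenvalues_pos i
  have hdB : 0 < ∏ i, ν i := prod_pos hν
  refine ⟨∑ i, μ i, ∑ i, (μ i)⁻¹, (∏ i, μ i) * ∏ i, ν i, ∏ i, ν i,
    sum_pos hμ univ_nonempty, sum_pos (fun i hi => inv_pos.2 (hμ i hi)) univ_nonempty,
    mul_pos (prod_pos hμ) hdB, hdB, ?_, ?_, ?_, ?_, ?_⟩
  · rw [trace_inv_mul_eq_trace_star_mul_mul hBU, hM.1.trace_eq_sum_eigenvalues]
    norm_cast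
  · rw [trace_inv_mul_eq_trace_inv_star_mul_mul hB.isUnit hBU, hM.trace_inv]
    norm_cast
  · rw [det_eq_det_star_mul_mul_mul_det hB.isUnit hBU, hM.1.det_eq_prod_eigenvalues,
      hB.1.det_eq_prod_eigenvalues]
    norm_cast
  · rw [hB.1.det_eq_prod_eigenvalues]
    norm_cast
  · rw [← mul_assoc, mul_div_cancel_right₀ _ hdB.ne']
    simpa only [card_univ, Fintype.card_fin] using
      Real.sum_inv_mul_prod_rpow_le_sum (by simpa only [card_univ, Fintype.card_fin] using hn) hμ
end

section
/- Let S be a set, let k ≥ 1, d, e be natural numbers, and let f₁, …, f_d : S → ℂ and g₁, …, g_e : S → ℂ be functions. Assume that for every choice of indices i₁, …, i_k ∈ {1, …, d} (repetitions allowed) the pointwise product f_{i₁} · f_{i₂} ⋯ f_{i_k} lies in the ℂ-linear span of g₁, …, g_e inside the vector space of functions S → ℂ. Then there exists a constant C > 0 such that (∑_{i=1}^d |f_i(s)|²)^k ≤ C · ∑_{j=1}^e |g_j(s)|² for all s ∈ S. -/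
/-!
Expanding `(∑ᵢ |fᵢ|²)^k` gives the sum of `|f_{i₁} ⋯ f_{i_k}|²` over all `k`-tuples of indices.
Each such product is a fixed linear combination `∑ⱼ cⱼ gⱼ`, so by Cauchy–Schwarz its squared
modulus is at most `(∑ⱼ |cⱼ|²) ∑ⱼ |gⱼ|²`; summing these finitely many bounds gives `C`.
-/

open Finset

theorem sum_norm_sq_pow {ι 𝕜 : Type*} [Fintype ι] [NormedField 𝕜] (x : ι → 𝕜) (k : ℕ) :
    (∑ i, ‖x i‖ ^ 2) ^ k = ∑ p : Fin k → ι, ‖∏ j, x (p j)‖ ^ 2 := by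
  simp only [Fintype.sum_pow, norm_prod, prod_pow]

theorem exists_norm_sq_le_of_mem_span {S κ 𝕜 : Type*} [Fintype κ] [NormedField 𝕜]
    {g : κ → S → 𝕜} {φ : S → 𝕜} (hφ : φ ∈ Submodule.span 𝕜 (Set.range g)) :
    ∃ C : ℝ, 0 ≤ C ∧ ∀ s, ‖φ s‖ ^ 2 ≤ C * ∑ j, ‖g j s‖ ^ 2 := by
  obtain ⟨c, rfl⟩ := (Submodule.mem_span_range_iff_exists_fun 𝕜).mp hφ
  refine ⟨∑ j, ‖c j‖ ^ 2, by positivity, fun s => ?_⟩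
  have triangle : ‖(∑ j, c j • g j) s‖ ≤ ∑ j, ‖c j‖ * ‖g j s‖ := by
    simpa only [Finset.sum_apply, Pi.smul_apply, smul_eq_mul, norm_mul] using norm_sum_le univ fun j => c j * g j s
  calc ‖(∑ j, c j • g j) s‖ ^ 2 ≤ (∑ j, ‖c j‖ * ‖g j s‖) ^ 2 := by gcongr
    _ ≤ (∑ j, ‖c j‖ ^ 2) * ∑ j, ‖g j s‖ ^ 2 := sum_mul_sq_le_sq_mul_sq _ _ _

theorem stmt_5_general {S : Type*} (k d e : ℕ)
    (f : Fin d → S → ℂ) (g : Fin e → S → ℂ)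
    (h : ∀ i : Fin k → Fin d,
      (fun s => ∏ j, f (i j) s) ∈ Submodule.span ℂ (Set.range g)) :
    ∃ C : ℝ, 0 < C ∧ ∀ s : S,
      (∑ i, ‖f i s‖ ^ 2) ^ k ≤ C * ∑ j, ‖g j s‖ ^ 2 := by
  choose C hC_nonneg hC using fun p => exists_norm_sq_le_of_mem_span (h p)
  have hsum_nonneg : 0 ≤ ∑ p, C p := sum_nonneg fun p _ => hC_nonneg p
  refine ⟨∑ p, C p + 1, by linarith, fun s => ?_⟩
  have hg_nonneg : 0 ≤ ∑ j, ‖g j s‖ ^ 2 := by positivity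
  calc (∑ i, ‖f i s‖ ^ 2) ^ k = ∑ p : Fin k → Fin d, ‖∏ j, f (p j) s‖ ^ 2 :=
        sum_norm_sq_pow (f · s) k
    _ ≤ ∑ p, C p * ∑ j, ‖g j s‖ ^ 2 := sum_le_sum fun p _ => hC p s
    _ = (∑ p, C p) * ∑ j, ‖g j s‖ ^ 2 := (sum_mul _ _ _).symm
    _ ≤ (∑ p, C p + 1) * ∑ j, ‖g j s‖ ^ 2 := by gcongr; linarith

/-- If every `k`-fold product of the functions `f₁, …, f_d : S → ℂ` lies in the
`ℂ`-linear span of `g₁, …, g_e`, then there is `C > 0` with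
`(∑ |fᵢ(s)|²)^k ≤ C ∑ |g_j(s)|²` for all `s`. -/
theorem stmt_5 {S : Type*} (k d e : ℕ) (hk : 1 ≤ k)
    (f : Fin d → S → ℂ) (g : Fin e → S → ℂ)
    (h : ∀ i : Fin k → Fin d,
      (fun s => ∏ j, f (i j) s) ∈ Submodule.span ℂ (Set.range g)) :
    ∃ C : ℝ, 0 < C ∧ ∀ s : S,
      (∑ i, ‖f i s‖ ^ 2) ^ k ≤ C * ∑ j, ‖g j s‖ ^ 2 :=
  stmt_5_general k d e f g h
end
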